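/- arXiv:math/0702737 — 6 statements merged into one kernel-verified Lean document; each statement's English description precedes it below -/
import Mathlib

section
/- If R : ℝ → Matrix (Fin 3) (Fin 3) ℝ satisfies the differential equation R'(t) = R(t) * S(Ω(t)) for a continuous Ω : ℝ → ℝ³, and R(0) ∈ SO(3), then R(t) ∈ SO(3) for all t (i.e., R(t)ᵀ R(t) = 1 and det R(t) = 1). -/
open Matrix

def hat (a : Fin 3 → ℝ) : Matrix (Fin 3) (Fin 3) ℝ :=
  !![0, -a 2, a 1; a 2, 0, -a 0; -a 1, a 0, 0]

lemma hat_transpose (a : Fin 3 → ℝ) : (hat a)ᵀ = -hat a := by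
  ext i j; fin_cases i <;> fin_cases j <;> simp [hat]

section aux
attribute [local instance] Matrix.normedAddCommGroup Matrix.normedSpace

lemma hasDerivAt_entries {f : ℝ → Matrix (Fin 3) (Fin 3) ℝ} {f' : Matrix (Fin 3) (Fin 3) ℝ} {t : ℝ}
    (h : ∀ i j, HasDerivAt (fun s => f s i j) (f' i j) t) : HasDerivAt f f' t :=
  hasDerivAt_pi.mpr fun i => hasDerivAt_pi.mpr fun j => h i j

lemma norm_hat_le (a : Fin 3 → ℝ) : ‖hat a‖ ≤ |a 0| + |a 1| + |a 2| := by
  rw [Matrix.norm_le_iff (by positivity)]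
  intro i j
  fin_cases i <;> fin_cases j <;> simp [hat, Real.norm_eq_abs] <;>
    nlinarith [abs_nonneg (a 0), abs_nonneg (a 1), abs_nonneg (a 2)]

lemma norm_mul_le3 (X Y : Matrix (Fin 3) (Fin 3) ℝ) : ‖X * Y‖ ≤ 3 * ‖X‖ * ‖Y‖ := by
  rw [Matrix.norm_le_iff (by positivity)]
  intro i j
  rw [Matrix.mul_apply]
  calc ‖∑ k, X i k * Y k j‖ ≤ ∑ k, ‖X i k * Y k j‖ := norm_sum_le _ _
    _ ≤ ∑ _k : Fin 3, ‖X‖ * ‖Y‖ := Finset.sum_le_sum fun k _ => by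
        rw [norm_mul]
        exact mul_le_mul (norm_entry_le_entrywise_sup_norm X)
          (norm_entry_le_entrywise_sup_norm Y) (norm_nonneg _) (norm_nonneg _)
    _ = 3 * ‖X‖ * ‖Y‖ := by simp [Finset.sum_const]; ring

lemma gram_eq_one (R : ℝ → Matrix (Fin 3) (Fin 3) ℝ) (Ω : ℝ → Fin 3 → ℝ)
    (hΩ : Continuous Ω)
    (hR : ∀ t i j, HasDerivAt (fun s => R s i j) ((R t * hat (Ω t)) i j) t)
    (h0 : (R 0)ᵀ * R 0 = 1) : ∀ t, (R t)ᵀ * R t = 1 := by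
  intro t₁
  set A : ℝ → Matrix (Fin 3) (Fin 3) ℝ := fun t => hat (Ω t) with hA
  set F : ℝ → Matrix (Fin 3) (Fin 3) ℝ := fun t => (R t)ᵀ * R t with hFdef
  -- derivative of F
  have hFd : ∀ t, HasDerivAt F (F t * A t - A t * F t) t := by
    intro t
    have key : ∀ i j, HasDerivAt (fun s => F s i j)
        (((R t * A t)ᵀ * R t + (R t)ᵀ * (R t * A t)) i j) t := by
      intro i j
      have h1 : (fun s => F s i j) = fun s => ∑ k, R s k i * R s k j := by
        funext s; simp [hFdef, Matrix.mul_apply, Matrix.transpose_apply]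
      have h2 : ((R t * A t)ᵀ * R t + (R t)ᵀ * (R t * A t)) i j
          = ∑ k, ((R t * A t) k i * R t k j + R t k i * (R t * A t) k j) := by
        simp only [Matrix.mul_apply, Matrix.add_apply, Matrix.transpose_apply,
          Finset.sum_add_distrib]
      rw [h1, h2]
      exact HasDerivAt.fun_sum fun k _ => (hR t k i).mul (hR t k j)
    have alg : (R t * A t)ᵀ * R t + (R t)ᵀ * (R t * A t) = F t * A t - A t * F t := by
      rw [Matrix.transpose_mul, hat_transpose]
      simp only [hFdef]
      noncomm_ring
    rw [← alg]
    exact hasDerivAt_entries key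
  have hFc : Continuous F := continuous_iff_continuousAt.mpr fun t => (hFd t).continuousAt
  -- set up interval
  set a : ℝ := -(|t₁| + 1) with ha
  set b : ℝ := |t₁| + 1 with hb
  have hab : a ≤ b := by rw [ha]; nlinarith [abs_nonneg t₁]
  have ht₁ : t₁ ∈ Set.Icc a b := ⟨by simp [ha]; nlinarith [neg_abs_le t₁], by
    simp [hb]; nlinarith [le_abs_self t₁]⟩
  have h0mem : (0:ℝ) ∈ Set.Ioo a b := ⟨by simp [ha]; positivity, by simp [hb]; positivity⟩
  set B : ℝ → Matrix (Fin 3) (Fin 3) ℝ := fun t => A ((Set.projIcc a b hab t : ℝ)) with hB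
  -- bound
  obtain ⟨C, hC⟩ : ∃ C, ∀ t ∈ Set.Icc a b, |Ω t 0| + |Ω t 1| + |Ω t 2| ≤ C := by
    obtain ⟨C, hC⟩ := (isCompact_Icc (a := a) (b := b)).exists_bound_of_continuousOn
      (f := fun t => |Ω t 0| + |Ω t 1| + |Ω t 2|)
      (((((continuous_apply 0).comp hΩ).abs.add
          ((continuous_apply 1).comp hΩ).abs).add
          ((continuous_apply 2).comp hΩ).abs).continuousOn)
    exact ⟨C, fun t ht => le_trans (le_abs_self _) (hC t ht)⟩
  have hBC : ∀ t, ‖B t‖ ≤ C := fun t =>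
    (norm_hat_le _).trans (hC _ (Set.projIcc a b hab t).2)
  have hC0 : 0 ≤ C := le_trans (norm_nonneg _) (hBC 0)
  set v : ℝ → Matrix (Fin 3) (Fin 3) ℝ → Matrix (Fin 3) (Fin 3) ℝ :=
    fun t M => M * B t - B t * M with hv
  have hlip : ∀ t, LipschitzOnWith (Real.toNNReal (6 * C)) (v t) Set.univ := by
    intro t
    rw [lipschitzOnWith_univ]
    apply LipschitzWith.of_dist_le_mul
    intro M N
    have hdiff : v t M - v t N = (M - N) * B t - B t * (M - N) := by
      simp only [hv]; noncomm_ring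
    rw [dist_eq_norm, dist_eq_norm, hdiff]
    have := norm_mul_le3 (M - N) (B t)
    have := norm_mul_le3 (B t) (M - N)
    have hcoe : (Real.toNNReal (6 * C) : ℝ) = 6 * C := Real.coe_toNNReal _ (by positivity)
    rw [hcoe]
    have h1 := norm_sub_le ((M - N) * B t) (B t * (M - N))
    nlinarith [hBC t, norm_nonneg (M - N)]
  have hproj : ∀ t ∈ Set.Ioo a b, B t = A t := fun t ht => by
    simp only [hB, Set.projIcc_of_mem hab (Set.Ioo_subset_Icc_self ht)]
  have key := ODE_solution_unique_of_mem_Icc (v := v) (s := fun _ => Set.univ)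
    (hv := fun t _ => hlip t) (ht := h0mem)
    (hf := hFc.continuousOn)
    (hf' := fun t ht => by
      show HasDerivAt F (F t * B t - B t * F t) t
      rw [hproj t ht]; exact hFd t)
    (hfs := fun _ _ => trivial)
    (hg := continuousOn_const (c := (1 : Matrix (Fin 3) (Fin 3) ℝ)))
    (hg' := fun t ht => by
      have : v t ((fun _ => (1 : Matrix (Fin 3) (Fin 3) ℝ)) t) = 0 := by
        simp [hv]
      rw [this]; exact hasDerivAt_const t 1)
    (hgs := fun _ _ => trivial)
    (heq := by simpa [hFdef] using h0)
  exact key ht₁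

end aux


/-- If `R' = R S(Ω)` with `Ω` continuous and `R(0) ∈ SO(3)`, then `R(t) ∈ SO(3)` for all `t`. -/
theorem attitude_stays_in_SO3 (R : ℝ → Matrix (Fin 3) (Fin 3) ℝ) (Ω : ℝ → Fin 3 → ℝ)
    (hΩ : Continuous Ω)
    (hR : ∀ t i j, HasDerivAt (fun s => R s i j) ((R t * hat (Ω t)) i j) t)
    (hR0 : (R 0)ᵀ * R 0 = 1 ∧ (R 0).det = 1) :
    ∀ t, (R t)ᵀ * R t = 1 ∧ (R t).det = 1 := by
  have h1 := gram_eq_one R Ω hΩ hR hR0.1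
  have hd2 : ∀ t, (R t).det ^ 2 = 1 := by
    intro t
    have := congrArg Matrix.det (h1 t)
    simpa [Matrix.det_mul, Matrix.det_transpose, sq] using this
  have hRc : Continuous fun t => R t := by
    apply continuous_matrix
    intro i j
    exact continuous_iff_continuousAt.mpr fun t => (hR t i j).continuousAt
  have hdc : Continuous fun t => (R t).det := hRc.matrix_det
  have hval : ∀ t, (R t).det = 1 ∨ (R t).det = -1 := by
    intro t
    rcases mul_eq_zero.mp (by nlinarith [hd2 t] :
        ((R t).det - 1) * ((R t).det + 1) = 0) with h | h
    · left; linarith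
    · right; linarith
  intro t
  refine ⟨h1 t, ?_⟩
  rcases hval t with h | h
  · exact h
  · exfalso
    have hmem : (0:ℝ) ∈ Set.uIcc ((fun s => (R s).det) 0) ((fun s => (R s).det) t) := by
      simp only [hR0.2, h]
      rw [Set.mem_uIcc]
      norm_num
    obtain ⟨s, _, hs⟩ := intermediate_value_uIcc (hdc.continuousOn) hmem
    rcases hval s with h' | h' <;> simp only at hs <;> rw [hs] at h' <;> norm_num at h'
end

section
/- Suppose (R, Ω) : ℝ → SO(3) × ℝ³ satisfies the 3D pendulum equations J Ω' = (J Ω) ×ᵥ Ω + m g ρ ×ᵥ (Rᵀ e₃) and R' = R S(Ω). Then the total energy E(t) = ½ ⟨Ω(t), J Ω(t)⟩ − m g ⟨ρ, R(t)ᵀ e₃⟩ is constant in t. -/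
open Matrix

def e₃ : Fin 3 → ℝ := ![0, 0, 1]

/-- Energy conservation for the 3D pendulum. -/
theorem pendulum_energy_conservation (J : Matrix (Fin 3) (Fin 3) ℝ)
    (hJsym : Jᵀ = J) (hJ : J.PosDef) (m g : ℝ) (hm : 0 < m) (hg : 0 < g) (ρ : Fin 3 → ℝ)
    (R : ℝ → Matrix (Fin 3) (Fin 3) ℝ) (Ω Ω' : ℝ → Fin 3 → ℝ)
    (hΩ : ∀ t, HasDerivAt Ω (Ω' t) t)
    (hEuler : ∀ t, J.mulVec (Ω' t) =
      crossProduct (J.mulVec (Ω t)) (Ω t) + (m * g) • crossProduct ρ ((R t)ᵀ.mulVec e₃))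
    (hR : ∀ t i j, HasDerivAt (fun s => R s i j) ((R t * hat (Ω t)) i j) t)
    (hSO : ∀ t, (R t)ᵀ * R t = 1 ∧ (R t).det = 1) :
    ∀ t₁ t₂, (1 / 2) * (Ω t₁ ⬝ᵥ J.mulVec (Ω t₁)) - m * g * (ρ ⬝ᵥ (R t₁)ᵀ.mulVec e₃)
      = (1 / 2) * (Ω t₂ ⬝ᵥ J.mulVec (Ω t₂)) - m * g * (ρ ⬝ᵥ (R t₂)ᵀ.mulVec e₃) := by
  have key : ∀ t, HasDerivAt (fun s => (1 / 2) * (Ω s ⬝ᵥ J.mulVec (Ω s))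
      - m * g * (ρ ⬝ᵥ (R s)ᵀ.mulVec e₃)) 0 t := by
    intro t
    have hΩi : ∀ i, HasDerivAt (fun s => Ω s i) (Ω' t i) t :=
      fun i => hasDerivAt_pi.mp (hΩ t) i
    have hE0 := congrFun (hEuler t) 0
    have hE1 := congrFun (hEuler t) 1
    have hE2 := congrFun (hEuler t) 2
    simp only [mulVec, dotProduct, Fin.sum_univ_three, crossProduct, Pi.add_apply,
      Pi.smul_apply, smul_eq_mul, transpose_apply, e₃, LinearMap.mk₂_apply,
      Matrix.cons_val_zero, Matrix.cons_val_one, Matrix.head_cons,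
      Matrix.cons_val_two, Matrix.tail_cons] at hE0 hE1 hE2
    have hJs : ∀ i j, J j i = J i j := by
      intro i j; conv_lhs => rw [← hJsym]
      simp [transpose_apply]
    have hfun : (fun s => (1 / 2) * (Ω s ⬝ᵥ J.mulVec (Ω s))
        - m * g * (ρ ⬝ᵥ (R s)ᵀ.mulVec e₃))
        = fun s => (1/2) * (Ω s 0 * (J 0 0 * Ω s 0 + J 0 1 * Ω s 1 + J 0 2 * Ω s 2)
            + Ω s 1 * (J 1 0 * Ω s 0 + J 1 1 * Ω s 1 + J 1 2 * Ω s 2)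
            + Ω s 2 * (J 2 0 * Ω s 0 + J 2 1 * Ω s 1 + J 2 2 * Ω s 2))
          - m * g * (ρ 0 * R s 2 0 + ρ 1 * R s 2 1 + ρ 2 * R s 2 2) := by
      funext s
      simp [dotProduct, mulVec, Fin.sum_univ_three, e₃, transpose_apply]
    rw [hfun]
    have L : ∀ i, HasDerivAt (fun s => J i 0 * Ω s 0 + J i 1 * Ω s 1 + J i 2 * Ω s 2)
        (J i 0 * Ω' t 0 + J i 1 * Ω' t 1 + J i 2 * Ω' t 2) t := fun i =>
      (((hΩi 0).const_mul _).add ((hΩi 1).const_mul _)).add ((hΩi 2).const_mul _)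
    have K := (((hΩi 0).mul (L 0)).add ((hΩi 1).mul (L 1))).add ((hΩi 2).mul (L 2))
    have G := ((((hR t 2 0).const_mul (ρ 0)).add ((hR t 2 1).const_mul (ρ 1))).add
      ((hR t 2 2).const_mul (ρ 2)))
    have D := (K.const_mul (1/2 : ℝ)).sub (G.const_mul (m * g))
    refine D.congr_deriv (Eq.symm ?_)
    simp only [Matrix.mul_apply, hat, Fin.sum_univ_three,
      Matrix.cons_val_zero, Matrix.cons_val_one, Matrix.head_cons,
      Matrix.cons_val_two, Matrix.tail_cons, Matrix.cons_val', Matrix.head_fin_const,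
      Matrix.empty_val', Matrix.cons_val_fin_one, Matrix.of_apply]
    rw [hJs 0 1, hJs 0 2, hJs 1 2] at hE0 hE1 hE2 ⊢
    linear_combination (-(Ω t 0) : ℝ) * hE0 - Ω t 1 * hE1 - Ω t 2 * hE2
  have hconst : ∀ x y, (fun s => (1 / 2) * (Ω s ⬝ᵥ J.mulVec (Ω s))
      - m * g * (ρ ⬝ᵥ (R s)ᵀ.mulVec e₃)) x
      = (fun s => (1 / 2) * (Ω s ⬝ᵥ J.mulVec (Ω s)) - m * g * (ρ ⬝ᵥ (R s)ᵀ.mulVec e₃)) y :=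
    is_const_of_deriv_eq_zero (fun x => (key x).differentiableAt)
      (fun x => (key x).deriv)
  exact fun t₁ t₂ => hconst t₁ t₂
end

section
/- Suppose (R, Ω) satisfies the 3D pendulum equations J Ω' = (J Ω) ×ᵥ Ω + m g ρ ×ᵥ (Rᵀ e₃) and R' = R S(Ω). Then the vertical component of the spatial angular momentum, π₃(t) = ⟨R(t) (J Ω(t)), e₃⟩, is constant in t. -/
open Matrix

/-- Conservation of the vertical component of spatial angular momentum for the 3D pendulum. -/
theorem pendulum_vertical_momentum_conservation (J : Matrix (Fin 3) (Fin 3) ℝ)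
    (hJsym : Jᵀ = J) (hJ : J.PosDef) (m g : ℝ) (hm : 0 < m) (hg : 0 < g) (ρ : Fin 3 → ℝ)
    (R : ℝ → Matrix (Fin 3) (Fin 3) ℝ) (Ω Ω' : ℝ → Fin 3 → ℝ)
    (hΩ : ∀ t, HasDerivAt Ω (Ω' t) t)
    (hEuler : ∀ t, J.mulVec (Ω' t) =
      crossProduct (J.mulVec (Ω t)) (Ω t) + (m * g) • crossProduct ρ ((R t)ᵀ.mulVec e₃))
    (hR : ∀ t i j, HasDerivAt (fun s => R s i j) ((R t * hat (Ω t)) i j) t)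
    (hSO : ∀ t, (R t)ᵀ * R t = 1 ∧ (R t).det = 1) :
    ∀ t₁ t₂, (R t₁).mulVec (J.mulVec (Ω t₁)) ⬝ᵥ e₃ = (R t₂).mulVec (J.mulVec (Ω t₂)) ⬝ᵥ e₃ := by
  set f : ℝ → ℝ := fun t => (R t).mulVec (J.mulVec (Ω t)) ⬝ᵥ e₃ with hf
  have hΩc : ∀ t k, HasDerivAt (fun s => Ω s k) (Ω' t k) t := by
    intro t k
    exact (hasDerivAt_pi.mp (hΩ t)) k
  have hfderiv : ∀ t, HasDerivAt f 0 t := by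
    intro t
    have hg' : HasDerivAt (fun s => ∑ j, ∑ k, R s 2 j * (J j k * Ω s k))
        (∑ j, ∑ k, ((R t * hat (Ω t)) 2 j * (J j k * Ω t k)
          + R t 2 j * (J j k * Ω' t k))) t := by
      apply HasDerivAt.fun_sum
      intro j _
      apply HasDerivAt.fun_sum
      intro k _
      exact (hR t 2 j).mul ((hΩc t k).const_mul (J j k))
    have hfeq : f = fun s => ∑ j, ∑ k, R s 2 j * (J j k * Ω s k) := by
      funext s
      simp [hf, mulVec, dotProduct, e₃, Fin.sum_univ_three, Finset.mul_sum]
      ring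
    have hzero : (∑ j, ∑ k, ((R t * hat (Ω t)) 2 j * (J j k * Ω t k)
          + R t 2 j * (J j k * Ω' t k))) = 0 := by
      have key : ∀ j, (∑ k, R t 2 j * (J j k * Ω' t k))
          = R t 2 j * ((crossProduct (J.mulVec (Ω t)) (Ω t)
            + (m * g) • crossProduct ρ ((R t)ᵀ.mulVec e₃)) j) := by
        intro j
        rw [← Finset.mul_sum, ← hEuler t]
        rfl
      rw [Finset.sum_congr rfl (fun j _ => by rw [Finset.sum_add_distrib, key j])]
      simp only [cross_apply, Pi.add_apply, Pi.smul_apply,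
        Matrix.mul_apply, hat, mulVec, dotProduct, transpose_apply, e₃,
        Fin.sum_univ_three, smul_eq_mul]
      simp
      ring
    rw [hfeq]
    rw [← hzero]
    exact hg'
  have hconst := is_const_of_deriv_eq_zero
    (fun t => (hfderiv t).differentiableAt) (fun t => (hfderiv t).deriv)
  intro t₁ t₂
  exact hconst t₁ t₂
end

section
/- A pair (R, Ω) ∈ SO(3) × ℝ³ is an equilibrium of the 3D pendulum equations (i.e., the right-hand sides of J Ω' = J Ω ×ᵥ Ω + m g ρ ×ᵥ Rᵀe₃ and R' = R S(Ω) vanish) if and only if Ω = 0 and Rᵀ e₃ is collinear with ρ, i.e., Rᵀ e₃ = ρ/‖ρ‖ or Rᵀ e₃ = −ρ/‖ρ‖. -/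
/-! Since `R` is invertible, `R * hat Ω = 0` forces `hat Ω = 0`, i.e. `Ω = 0`, which kills the
gyroscopic term. What is left says `ρ ⨯₃ Rᵀe₃ = 0`, so the unit vector `Rᵀe₃` is a multiple
`c • ρ` of `ρ`, and `c² ‖ρ‖² = 1` leaves only `c = ±1/‖ρ‖`. -/

open Matrix

theorem hat_eq_zero_iff {a : Fin 3 → ℝ} : hat a = 0 ↔ a = 0 := by
  constructor
  · intro h
    have h01 := congrFun (congrFun h 0) 1
    have h02 := congrFun (congrFun h 0) 2
    have h12 := congrFun (congrFun h 1) 2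
    simp [hat] at h01 h02 h12
    ext i
    fin_cases i <;> simp [h01, h02, h12]
  · rintro rfl
    ext i j
    fin_cases i <;> fin_cases j <;> simp [hat]

theorem transpose_mulVec_dotProduct_self {n α : Type*} [Fintype n] [DecidableEq n]
    [CommSemiring α] {A : Matrix n n α} (hA : A * Aᵀ = 1) (v : n → α) :
    (Aᵀ *ᵥ v) ⬝ᵥ (Aᵀ *ᵥ v) = v ⬝ᵥ v := by
  rw [dotProduct_mulVec, vecMul_transpose, mulVec_mulVec, hA, one_mulVec]

theorem exists_eq_smul_of_cross_eq_zero {a b : Fin 3 → ℝ} (ha : a ≠ 0) (h : a ⨯₃ b = 0) :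
    ∃ c : ℝ, b = c • a := by
  have hdep : ¬LinearIndependent ℝ ![b, a] := by
    rw [← crossProduct_ne_zero_iff_linearIndependent, ← cross_anticomm, h, neg_zero]
    exact not_not_intro rfl
  simp only [linearIndependent_fin2, cons_val_one, cons_val_zero, not_and, not_forall,
    not_not] at hdep
  obtain ⟨c, hc⟩ := hdep ha
  exact ⟨c, hc.symm⟩

theorem smul_eq_inv_sqrt_smul_or_neg {n : Type*} [Fintype n] {a : n → ℝ} {c : ℝ}
    (h : (c • a) ⬝ᵥ (c • a) = 1) :
    c • a = (√(a ⬝ᵥ a))⁻¹ • a ∨ c • a = -((√(a ⬝ᵥ a))⁻¹ • a) := by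
  have hsq : (c * √(a ⬝ᵥ a)) * (c * √(a ⬝ᵥ a)) = 1 := by
    rw [mul_mul_mul_comm, Real.mul_self_sqrt (by simpa using dotProduct_self_star_nonneg a)]
    simpa [smul_dotProduct, dotProduct_smul, mul_assoc] using h
  rcases mul_self_eq_one_iff.mp hsq with h1 | h1
  · exact Or.inl (by rw [eq_inv_of_mul_eq_one_left h1])
  · refine Or.inr ?_
    rw [← neg_smul, ← eq_inv_of_mul_eq_one_left (a := -c) (by rw [neg_mul, h1, neg_neg]),
      neg_neg]

theorem pendulum_equilibria_general (J : Matrix (Fin 3) (Fin 3) ℝ)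
    (m g : ℝ) (hm : 0 < m) (hg : 0 < g)
    (ρ : Fin 3 → ℝ) (hρ : ρ ≠ 0)
    (R : Matrix (Fin 3) (Fin 3) ℝ) (hR : Rᵀ * R = 1)
    (Ω : Fin 3 → ℝ) :
    (crossProduct (J.mulVec Ω) Ω + (m * g) • crossProduct ρ (Rᵀ.mulVec e₃) = 0 ∧
        R * hat Ω = 0) ↔
      (Ω = 0 ∧ (Rᵀ.mulVec e₃ = (Real.sqrt (ρ ⬝ᵥ ρ))⁻¹ • ρ ∨
        Rᵀ.mulVec e₃ = -((Real.sqrt (ρ ⬝ᵥ ρ))⁻¹ • ρ))) := by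
  constructor
  · rintro ⟨heq, hrot⟩
    obtain rfl : Ω = 0 := hat_eq_zero_iff.mp <| by
      simpa [← Matrix.mul_assoc, hR] using congrArg (Rᵀ * ·) hrot
    have hcross : ρ ⨯₃ (Rᵀ *ᵥ e₃) = 0 := by simpa [hm.ne', hg.ne'] using heq
    obtain ⟨c, hc⟩ := exists_eq_smul_of_cross_eq_zero hρ hcross
    have hunit : (Rᵀ *ᵥ e₃) ⬝ᵥ (Rᵀ *ᵥ e₃) = 1 := by
      simp [transpose_mulVec_dotProduct_self (mul_eq_one_comm.mp hR), e₃]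
    rw [hc] at hunit ⊢
    exact ⟨rfl, smul_eq_inv_sqrt_smul_or_neg hunit⟩
  · rintro ⟨rfl, hv⟩
    refine ⟨?_, by rw [hat_eq_zero_iff.mpr rfl, Matrix.mul_zero]⟩
    rcases hv with hv | hv <;> simp [hv, cross_self]

/-- Characterization of the equilibria of the 3D pendulum. -/
theorem pendulum_equilibria (J : Matrix (Fin 3) (Fin 3) ℝ)
    (hJsym : Jᵀ = J) (hJ : J.PosDef) (m g : ℝ) (hm : 0 < m) (hg : 0 < g)
    (ρ : Fin 3 → ℝ) (hρ : ρ ≠ 0)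
    (R : Matrix (Fin 3) (Fin 3) ℝ) (hR : Rᵀ * R = 1) (hdet : R.det = 1)
    (Ω : Fin 3 → ℝ) :
    (crossProduct (J.mulVec Ω) Ω + (m * g) • crossProduct ρ (Rᵀ.mulVec e₃) = 0 ∧
        R * hat Ω = 0) ↔
      (Ω = 0 ∧ (Rᵀ.mulVec e₃ = (Real.sqrt (ρ ⬝ᵥ ρ))⁻¹ • ρ ∨
        Rᵀ.mulVec e₃ = -((Real.sqrt (ρ ⬝ᵥ ρ))⁻¹ • ρ))) :=
  pendulum_equilibria_general J m g hm hg ρ hρ R hR Ω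
end

section
/- The Lie group variational integrator exactly conserves the vertical component of spatial angular momentum: under the update equations h S(J Ω_k + (h/2) M_k) = F_k J_d − J_d F_kᵀ, R_{k+1} = R_k F_k, J Ω_{k+1} = F_kᵀ J Ω_k + (h/2) F_kᵀ M_k + (h/2) M_{k+1} with M_k = m g ρ ×ᵥ (R_kᵀ e₃), one has ⟨R_{k+1} J Ω_{k+1}, e₃⟩ − ⟨R_k J Ω_k, e₃⟩ = (h/2)(⟨R_k M_k, e₃⟩ + ⟨R_{k+1} M_{k+1}, e₃⟩), and each term ⟨R_j M_j, e₃⟩ = 0, so that ⟨R_{k+1} J Ω_{k+1}, e₃⟩ = ⟨R_k J Ω_k, e₃⟩. -/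
open Matrix

lemma vert_zero (R : Matrix (Fin 3) (Fin 3) ℝ) (c : ℝ) (ρ : Fin 3 → ℝ) :
    R.mulVec (c • crossProduct ρ (Rᵀ.mulVec e₃)) ⬝ᵥ e₃ = 0 := by
  have h1 : R.mulVec (c • crossProduct ρ (Rᵀ.mulVec e₃)) ⬝ᵥ e₃
      = (c • crossProduct ρ (Rᵀ.mulVec e₃)) ⬝ᵥ (Rᵀ.mulVec e₃) := by
    rw [dotProduct_comm, Matrix.dotProduct_mulVec, dotProduct_comm,
      ← Matrix.mulVec_transpose]
  rw [h1, smul_dotProduct, dotProduct_comm, dot_cross_self, smul_zero]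

/-- The Lie group variational integrator exactly conserves the vertical component of the
spatial angular momentum. -/
theorem lgvi_conserves_vertical_momentum (J1 J2 J3 : ℝ)
    (h1 : 0 < J1) (h2 : 0 < J2) (h3 : 0 < J3)
    (h m g : ℝ) (hh : 0 < h) (hm : 0 < m) (hg : 0 < g) (ρ : Fin 3 → ℝ)
    (J Jd Rk Rk1 Fk : Matrix (Fin 3) (Fin 3) ℝ) (Ωk Ωk1 Mk Mk1 : Fin 3 → ℝ)
    (hJ : J = Matrix.diagonal ![J1, J2, J3])
    (hJd : Jd = (J.trace / 2) • 1 - J)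
    (hMk : Mk = (m * g) • crossProduct ρ (Rkᵀ.mulVec e₃))
    (hMk1 : Mk1 = (m * g) • crossProduct ρ (Rk1ᵀ.mulVec e₃))
    (hFSO : Fkᵀ * Fk = 1 ∧ Fk.det = 1)
    (hFk : h • hat (J.mulVec Ωk + (h / 2) • Mk) = Fk * Jd - Jd * Fkᵀ)
    (hRup : Rk1 = Rk * Fk)
    (hΩup : J.mulVec Ωk1 = Fkᵀ.mulVec (J.mulVec Ωk) + (h / 2) • Fkᵀ.mulVec Mk + (h / 2) • Mk1)
    (hRk : Rkᵀ * Rk = 1 ∧ Rk.det = 1) :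
    (Rk1.mulVec (J.mulVec Ωk1) ⬝ᵥ e₃ - Rk.mulVec (J.mulVec Ωk) ⬝ᵥ e₃
        = (h / 2) * (Rk.mulVec Mk ⬝ᵥ e₃ + Rk1.mulVec Mk1 ⬝ᵥ e₃)) ∧
      Rk.mulVec Mk ⬝ᵥ e₃ = 0 ∧ Rk1.mulVec Mk1 ⬝ᵥ e₃ = 0 := by
  have hz0 : Rk.mulVec Mk ⬝ᵥ e₃ = 0 := by rw [hMk]; exact vert_zero _ _ _
  have hz1 : Rk1.mulVec Mk1 ⬝ᵥ e₃ = 0 := by rw [hMk1]; exact vert_zero _ _ _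
  refine ⟨?_, hz0, hz1⟩
  have hFF : Fk * Fkᵀ = 1 := mul_eq_one_comm.mp hFSO.1
  have key : Rk1.mulVec (J.mulVec Ωk1)
      = Rk.mulVec (J.mulVec Ωk) + (h / 2) • Rk.mulVec Mk + (h / 2) • Rk1.mulVec Mk1 := by
    rw [hΩup, hRup]
    simp only [Matrix.mulVec_add, Matrix.mulVec_smul, Matrix.mulVec_mulVec]
    rw [← Matrix.mul_assoc (Rk * Fk) Fkᵀ J, Matrix.mul_assoc Rk Fk Fkᵀ, hFF, Matrix.mul_one]
  rw [key]
  simp only [add_dotProduct, smul_dotProduct, smul_eq_mul]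
  ring
end

section
/- The hanging equilibrium of the 3D pendulum is stable in the sense of Lyapunov for the reduced dynamics: the function V(Γ, Ω) = ½⟨Ω, J Ω⟩ + m g (‖ρ‖ − ⟨ρ, Γ⟩) is nonnegative, vanishes exactly at (Γ, Ω) = (ρ/‖ρ‖, 0) on the set {‖Γ‖ = 1}, and is constant along solutions of Γ' = Γ ×ᵥ Ω, J Ω' = J Ω ×ᵥ Ω + m g ρ ×ᵥ Γ. -/
open Matrix

private lemma dot_deriv {f g : ℝ → Fin 3 → ℝ} {f' g' : Fin 3 → ℝ} {t : ℝ}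
    (hf : HasDerivAt f f' t) (hg : HasDerivAt g g' t) :
    HasDerivAt (fun s => f s ⬝ᵥ g s) (f' ⬝ᵥ g t + f t ⬝ᵥ g') t := by
  have h : HasDerivAt (fun s => ∑ i, f s i * g s i)
      (∑ i, (f' i * g t i + f t i * g' i)) t :=
    HasDerivAt.fun_sum fun i _ => (hasDerivAt_pi.mp hf i).mul (hasDerivAt_pi.mp hg i)
  simpa [dotProduct, Finset.sum_add_distrib] using h

private lemma mulVec_deriv {J : Matrix (Fin 3) (Fin 3) ℝ} {f : ℝ → Fin 3 → ℝ}
    {f' : Fin 3 → ℝ} {t : ℝ} (hf : HasDerivAt f f' t) :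
    HasDerivAt (fun s => J.mulVec (f s)) (J.mulVec f') t := by
  rw [hasDerivAt_pi]
  intro i
  simp only [Matrix.mulVec, dotProduct]
  exact HasDerivAt.fun_sum fun j _ => (hasDerivAt_pi.mp hf j).const_mul (J i j)

/-- The Lyapunov function for the hanging equilibrium of the reduced 3D pendulum dynamics. -/
noncomputable def V (J : Matrix (Fin 3) (Fin 3) ℝ) (m g : ℝ) (ρ Γ Ω : Fin 3 → ℝ) : ℝ :=
  (1 / 2) * (Ω ⬝ᵥ J.mulVec Ω) + m * g * (Real.sqrt (ρ ⬝ᵥ ρ) - ρ ⬝ᵥ Γ)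

/-- Lyapunov stability of the hanging equilibrium for the reduced dynamics:
`V` is nonnegative on the unit sphere, vanishes exactly at `(ρ/‖ρ‖, 0)`, and is
constant along solutions of `Γ' = Γ ×ᵥ Ω`, `J Ω' = J Ω ×ᵥ Ω + m g ρ ×ᵥ Γ`. -/
theorem hanging_equilibrium_lyapunov (J : Matrix (Fin 3) (Fin 3) ℝ)
    (hJsym : Jᵀ = J) (hJ : J.PosDef) (m g : ℝ) (hm : 0 < m) (hg : 0 < g)
    (ρ : Fin 3 → ℝ) (hρ : ρ ≠ 0) :
    (∀ Γ Ω : Fin 3 → ℝ, Γ ⬝ᵥ Γ = 1 → 0 ≤ V J m g ρ Γ Ω) ∧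
    (∀ Γ Ω : Fin 3 → ℝ, Γ ⬝ᵥ Γ = 1 →
      (V J m g ρ Γ Ω = 0 ↔ Γ = (Real.sqrt (ρ ⬝ᵥ ρ))⁻¹ • ρ ∧ Ω = 0)) ∧
    (∀ (Γ Ω Γ' Ω' : ℝ → Fin 3 → ℝ),
      (∀ t, HasDerivAt Γ (Γ' t) t) → (∀ t, HasDerivAt Ω (Ω' t) t) →
      (∀ t, Γ' t = crossProduct (Γ t) (Ω t)) →
      (∀ t, J.mulVec (Ω' t) =
        crossProduct (J.mulVec (Ω t)) (Ω t) + (m * g) • crossProduct ρ (Γ t)) →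
      ∀ t₁ t₂, V J m g ρ (Γ t₁) (Ω t₁) = V J m g ρ (Γ t₂) (Ω t₂)) := by
  set s := Real.sqrt (ρ ⬝ᵥ ρ) with hs_def
  have hρρ : 0 < ρ ⬝ᵥ ρ := by
    have hnn : 0 ≤ ρ ⬝ᵥ ρ :=
      Finset.sum_nonneg fun i _ => mul_self_nonneg (ρ i)
    rcases lt_or_eq_of_le hnn with h | h
    · exact h
    · exact absurd (dotProduct_self_eq_zero.mp h.symm) hρ
  have hs : 0 < s := Real.sqrt_pos.mpr hρρ
  have hs2 : s ^ 2 = ρ ⬝ᵥ ρ := Real.sq_sqrt hρρ.le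
  have hq : ∀ Ω : Fin 3 → ℝ, 0 ≤ Ω ⬝ᵥ J.mulVec Ω := fun Ω => by
    simpa using hJ.posSemidef.dotProduct_mulVec_nonneg Ω
  have hcs : ∀ Γ : Fin 3 → ℝ, Γ ⬝ᵥ Γ = 1 → ρ ⬝ᵥ Γ ≤ s := by
    intro Γ hΓ
    have h2 : (ρ ⬝ᵥ Γ) ^ 2 ≤ s ^ 2 := by
      rw [hs2]
      simp only [dotProduct, Fin.sum_univ_three] at hΓ ⊢
      nlinarith [sq_nonneg (ρ 0 * Γ 1 - ρ 1 * Γ 0), sq_nonneg (ρ 0 * Γ 2 - ρ 2 * Γ 0),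
        sq_nonneg (ρ 1 * Γ 2 - ρ 2 * Γ 1)]
    nlinarith [hs, h2]
  refine ⟨?_, ?_, ?_⟩
  · intro Γ Ω hΓ
    have := hq Ω
    have := hcs Γ hΓ
    unfold V
    nlinarith [mul_pos hm hg]
  · intro Γ Ω hΓ
    constructor
    · intro hV
      have hq0 : Ω ⬝ᵥ J.mulVec Ω = 0 := by
        have := hq Ω
        have := hcs Γ hΓ
        unfold V at hV
        nlinarith [mul_pos hm hg]
      have hΩ0 : Ω = 0 := by
        by_contra h
        have := hJ.dotProduct_mulVec_pos h
        simp only [star_trivial] at this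
        exact absurd hq0 (ne_of_gt this)
      have hdot : ρ ⬝ᵥ Γ = s := by
        unfold V at hV
        rw [hΩ0] at hV
        simp only [Matrix.mulVec_zero, dotProduct_zero, mul_zero] at hV
        nlinarith [mul_pos hm hg]
      refine ⟨?_, hΩ0⟩
      have hδ : (Γ - s⁻¹ • ρ) ⬝ᵥ (Γ - s⁻¹ • ρ) = 0 := by
        have hexp : (Γ - s⁻¹ • ρ) ⬝ᵥ (Γ - s⁻¹ • ρ) =
            Γ ⬝ᵥ Γ - 2 * s⁻¹ * (ρ ⬝ᵥ Γ) + s⁻¹ * s⁻¹ * (ρ ⬝ᵥ ρ) := by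
          simp [dotProduct, Fin.sum_univ_three, Pi.sub_apply, Pi.smul_apply, smul_eq_mul]
          ring
        rw [hexp, hΓ, hdot, ← hs2]
        field_simp
        ring
      have := dotProduct_self_eq_zero.mp hδ
      exact sub_eq_zero.mp this
    · rintro ⟨hΓ0, hΩ0⟩
      unfold V
      rw [hΓ0, hΩ0]
      have : ρ ⬝ᵥ s⁻¹ • ρ = s⁻¹ * (ρ ⬝ᵥ ρ) := by
        simp [dotProduct, Fin.sum_univ_three, Pi.smul_apply, smul_eq_mul]; ring
      rw [this, ← hs2]
      field_simp
      rw [Real.sqrt_sq hs.le]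
      simp only [Matrix.mulVec_zero, dotProduct_zero]
      ring
  · intro Γ Ω Γ' Ω' hΓd hΩd hcross hode
    have hF : ∀ t, HasDerivAt (fun u => V J m g ρ (Γ u) (Ω u)) 0 t := by
      intro t
      have h1 : HasDerivAt (fun u => Ω u ⬝ᵥ J.mulVec (Ω u))
          (Ω' t ⬝ᵥ J.mulVec (Ω t) + Ω t ⬝ᵥ J.mulVec (Ω' t)) t :=
        dot_deriv (hΩd t) (mulVec_deriv (hΩd t))
      have h2 : HasDerivAt (fun u => ρ ⬝ᵥ Γ u) (ρ ⬝ᵥ Γ' t) t := by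
        have := dot_deriv (hasDerivAt_const t ρ) (hΓd t)
        simpa using this
      have h3 : HasDerivAt (fun u => V J m g ρ (Γ u) (Ω u))
          ((1 / 2) * (Ω' t ⬝ᵥ J.mulVec (Ω t) + Ω t ⬝ᵥ J.mulVec (Ω' t)) +
            (m * g) * (0 - ρ ⬝ᵥ Γ' t)) t := by
        unfold V
        exact (h1.const_mul (1 / 2)).add
          (((hasDerivAt_const t (Real.sqrt (ρ ⬝ᵥ ρ))).sub h2).const_mul (m * g))
      have hsymJ : Ω' t ⬝ᵥ J.mulVec (Ω t) = Ω t ⬝ᵥ J.mulVec (Ω' t) := by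
        rw [dotProduct_mulVec, ← mulVec_transpose, hJsym, dotProduct_comm]
      have hzero : (1 / 2) * (Ω' t ⬝ᵥ J.mulVec (Ω t) + Ω t ⬝ᵥ J.mulVec (Ω' t)) +
          (m * g) * (0 - ρ ⬝ᵥ Γ' t) = 0 := by
        rw [hsymJ, dotProduct_comm, hode t, hcross t]
        simp only [cross_apply, dotProduct, Fin.sum_univ_three, Pi.add_apply, Pi.smul_apply,
          smul_eq_mul, Matrix.cons_val_zero, Matrix.cons_val_one, Matrix.head_cons,
          Matrix.cons_val_two, Matrix.tail_cons]
        ring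
      rw [hzero] at h3
      exact h3
    intro t₁ t₂
    exact is_const_of_deriv_eq_zero (fun t => (hF t).differentiableAt)
      (fun t => (hF t).deriv) t₁ t₂
end
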